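/- Let m be a positive integer and let A = (a_0, …, a_i) and B = (b_0, …, b_j) be finite sequences of positive integers with i ≥ 1 and j ≥ 1, satisfying m·[Ã] = [B]. Then the concatenation BA is an m-palindrome if and only if m·[a_i, …, a_1] = [b_0, …, b_{j−1}]. -/

import Mathlib

/-!
Encode `L = [a₀, …, a_n]` by `M_L = ∏ !![aₖ, 1; 1, 0] = !![p, p'; q, q']`, so that `[L] = p / q`.
Each factor is symmetric, so `M_{L̃} = M_Lᵀ` and `[L̃] = p / p'`; hence `L` is an `m`-palindrome
iff `p' = m q`. For `BA` the matrix is `M_B M_A`, and the hypothesis `m[Ã] = [B]` cancels one of the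
two products in each of `p'` and `m q`. What remains is the cross-multiplied form of
`m[a_i, …, a_1] = [b_0, …, b_{j-1}]`, whose matrices are the second row of `M_A` and the second
column of `M_B`.
-/

/-- Value of a finite continued fraction `[a₀, a₁, …, a_i] = a₀ + 1/(a₁ + 1/(⋯ + 1/a_i))`. -/
noncomputable def cfVal : List ℕ → ℝ
  | [] => 0
  | [a] => (a : ℝ)
  | a :: b :: rest => (a : ℝ) + 1 / cfVal (b :: rest)

/-- `A` is an `m`-palindrome: `[A] = m·[Ã]`, where `Ã` is the reversal of `A`. -/
def IsMPal (m : ℕ) (A : List ℕ) : Prop := cfVal A = (m : ℝ) * cfVal A.reverse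

/-- The prefix `(a₀, …, a_i)` of an infinite sequence of partial quotients. -/
def cfPrefix (a : ℕ → ℕ) (i : ℕ) : List ℕ := (List.range (i + 1)).map a

/-- Continuant numerators, index-shifted: `contP a (k+1) = p_k`, `contP a 0 = p₋₁ = 1`. -/
def contP (a : ℕ → ℕ) : ℕ → ℤ
  | 0 => 1
  | 1 => (a 0 : ℤ)
  | (k+2) => (a (k+1) : ℤ) * contP a (k+1) + contP a k

/-- Continuant denominators, index-shifted: `contQ a (k+1) = q_k`, `contQ a 0 = q₋₁ = 0`. -/
def contQ (a : ℕ → ℕ) : ℕ → ℤ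
  | 0 => 0
  | 1 => 1
  | (k+2) => (a (k+1) : ℤ) * contQ a (k+1) + contQ a k

/-- Concatenation of `k` copies of the finite sequence `A`. -/
def listPow (A : List ℕ) (k : ℕ) : List ℕ := (List.replicate k A).flatten

/-- `x` is a quadratic irrational. -/
def IsQuadraticIrrational (x : ℝ) : Prop :=
  Irrational x ∧ ∃ a b c : ℤ, a ≠ 0 ∧ (a : ℝ) * x ^ 2 + (b : ℝ) * x + (c : ℝ) = 0

/-- `x` is a reduced quadratic irrational: `x > 1` and its algebraic (Galois) conjugate
lies strictly between `-1` and `0`. -/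
def IsReducedQuadIrr (x : ℝ) : Prop :=
  Irrational x ∧ 1 < x ∧
    ∃ a b c : ℤ, a ≠ 0 ∧ (a : ℝ) * x ^ 2 + (b : ℝ) * x + (c : ℝ) = 0 ∧
      ∀ y : ℝ, y ≠ x → (a : ℝ) * y ^ 2 + (b : ℝ) * y + (c : ℝ) = 0 → -1 < y ∧ y < 0

/-- `x` and `y` are equivalent: `x = (a + b·y)/(c + d·y)` for integers with `ad - bc = ±1`. -/
def RealEquiv (x y : ℝ) : Prop :=
  ∃ a b c d : ℤ, (a * d - b * c = 1 ∨ a * d - b * c = -1) ∧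
    ((c : ℝ) + (d : ℝ) * y ≠ 0) ∧ x = ((a : ℝ) + (b : ℝ) * y) / ((c : ℝ) + (d : ℝ) * y)

open scoped Matrix

/-- The product of these along `[a₀, …, a_n]` is `!![p_n, p_{n-1}; q_n, q_{n-1}]`,
the continuants of the continued fraction. -/
def cfMat (a : ℕ) : Matrix (Fin 2) (Fin 2) ℕ := !![a, 1; 1, 0]

def cfMatProd (L : List ℕ) : Matrix (Fin 2) (Fin 2) ℕ := (L.map cfMat).prod

@[simp]
lemma cfMatProd_nil : cfMatProd [] = 1 := rfl

@[simp]
lemma cfMatProd_cons (a : ℕ) (L : List ℕ) : cfMatProd (a :: L) = cfMat a * cfMatProd L := by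
  simp [cfMatProd]

@[simp]
lemma cfMatProd_append (L M : List ℕ) : cfMatProd (L ++ M) = cfMatProd L * cfMatProd M := by
  simp [cfMatProd]

lemma cfMatProd_reverse (L : List ℕ) : cfMatProd L.reverse = (cfMatProd L)ᵀ := by
  have hsymm : Matrix.transpose ∘ cfMat = cfMat := by
    funext a; ext i j; fin_cases i <;> fin_cases j <;> rfl
  simp [cfMatProd, Matrix.transpose_list_prod, List.map_map, hsymm]

lemma cfMatProd_cons_one (a : ℕ) (L : List ℕ) (j : Fin 2) :
    cfMatProd (a :: L) 1 j = cfMatProd L 0 j := by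
  simp [cfMat, Matrix.mul_apply, Fin.sum_univ_two]

lemma cfMatProd_concat_one (L : List ℕ) (b : ℕ) (i : Fin 2) :
    cfMatProd (L ++ [b]) i 1 = cfMatProd L i 0 := by
  simp [cfMat, Matrix.mul_apply, Fin.sum_univ_two]

lemma cfMatProd_cons_zero_zero (a : ℕ) (L : List ℕ) :
    cfMatProd (a :: L) 0 0 = a * cfMatProd L 0 0 + cfMatProd L 1 0 := by
  simp [cfMat, Matrix.mul_apply, Fin.sum_univ_two]

lemma cfMatProd_zero_zero_pos {L : List ℕ} (hL : ∀ x ∈ L, 0 < x) : 0 < cfMatProd L 0 0 := by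
  induction L with
  | nil => simp
  | cons a L ih =>
    rw [cfMatProd_cons_zero_zero]
    have := hL a List.mem_cons_self
    have := ih fun x hx => hL x (List.mem_cons_of_mem a hx)
    positivity

lemma cfMatProd_one_zero_pos {L : List ℕ} (hL : ∀ x ∈ L, 0 < x) (hL₀ : L ≠ []) :
    0 < cfMatProd L 1 0 := by
  obtain ⟨a, L, rfl⟩ := List.exists_cons_of_ne_nil hL₀
  rw [cfMatProd_cons_one]
  exact cfMatProd_zero_zero_pos fun x hx => hL x (List.mem_cons_of_mem a hx)

lemma cfMatProd_zero_one_pos {L : List ℕ} (hL : ∀ x ∈ L, 0 < x) (hL₀ : L ≠ []) :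
    0 < cfMatProd L 0 1 := by
  simpa [cfMatProd_reverse] using
    cfMatProd_one_zero_pos (L := L.reverse) (by simpa using hL) (by simpa using hL₀)

lemma cfVal_cons (a : ℕ) (L : List ℕ) : cfVal (a :: L) = a + 1 / cfVal L := by
  cases L <;> simp [cfVal]

lemma cfVal_eq_div {L : List ℕ} (hL : ∀ x ∈ L, 0 < x) :
    cfVal L = (cfMatProd L 0 0 : ℝ) / cfMatProd L 1 0 := by
  induction L with
  | nil => simp [cfVal]
  | cons a L ih =>
    have hL' : ∀ x ∈ L, 0 < x := fun x hx => hL x (List.mem_cons_of_mem a hx)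
    have h₀ : (0 : ℝ) < cfMatProd L 0 0 := by exact_mod_cast cfMatProd_zero_zero_pos hL'
    rw [cfVal_cons, ih hL', cfMatProd_cons_zero_zero, cfMatProd_cons_one, one_div_div]
    push_cast
    field_simp

lemma cfVal_reverse_eq_div {L : List ℕ} (hL : ∀ x ∈ L, 0 < x) :
    cfVal L.reverse = (cfMatProd L 0 0 : ℝ) / cfMatProd L 0 1 := by
  rw [cfVal_eq_div (by simpa using hL), cfMatProd_reverse]
  rfl

lemma isMPal_iff {m : ℕ} {L : List ℕ} (hL : ∀ x ∈ L, 0 < x) (hL₀ : L ≠ []) :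
    IsMPal m L ↔ cfMatProd L 0 1 = m * cfMatProd L 1 0 := by
  have h₀₀ : (0 : ℝ) < cfMatProd L 0 0 := by exact_mod_cast cfMatProd_zero_zero_pos hL
  have h₁₀ : (0 : ℝ) < cfMatProd L 1 0 := by exact_mod_cast cfMatProd_one_zero_pos hL hL₀
  have h₀₁ : (0 : ℝ) < cfMatProd L 0 1 := by exact_mod_cast cfMatProd_zero_one_pos hL hL₀
  rw [IsMPal, cfVal_eq_div hL, cfVal_reverse_eq_div hL, ← mul_div_assoc,
    div_eq_div_iff h₁₀.ne' h₀₁.ne', ← @Nat.cast_inj ℝ]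
  push_cast
  rw [mul_assoc, mul_left_comm, mul_right_inj' h₀₀.ne']

lemma mul_cfVal_reverse_eq_cfVal_iff {m : ℕ} {A B : List ℕ} (hA : ∀ x ∈ A, 0 < x)
    (hB : ∀ x ∈ B, 0 < x) (hA₀ : A ≠ []) (hB₀ : B ≠ []) :
    m * cfVal A.reverse = cfVal B ↔
      m * cfMatProd A 0 0 * cfMatProd B 1 0 = cfMatProd B 0 0 * cfMatProd A 0 1 := by
  have h₁₀ : (0 : ℝ) < cfMatProd B 1 0 := by exact_mod_cast cfMatProd_one_zero_pos hB hB₀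
  have h₀₁ : (0 : ℝ) < cfMatProd A 0 1 := by exact_mod_cast cfMatProd_zero_one_pos hA hA₀
  rw [cfVal_reverse_eq_div hA, cfVal_eq_div hB, ← mul_div_assoc,
    div_eq_div_iff h₀₁.ne' h₁₀.ne', ← @Nat.cast_inj ℝ]
  push_cast
  rfl

theorem isMPal_append_cons_iff {m a b : ℕ} {A B : List ℕ} (hA : ∀ x ∈ a :: A, 0 < x)
    (hB : ∀ x ∈ B ++ [b], 0 < x) (hA₀ : A ≠ []) (hB₀ : B ≠ [])
    (hAB : m * cfVal (a :: A).reverse = cfVal (B ++ [b])) :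
    IsMPal m (B ++ [b] ++ a :: A) ↔ m * cfVal A.reverse = cfVal B := by
  have hA' : ∀ x ∈ A, 0 < x := fun x hx => hA x (List.mem_cons_of_mem a hx)
  have hB' : ∀ x ∈ B, 0 < x := fun x hx => hB x (List.mem_append_left _ hx)
  have hBA : ∀ x ∈ B ++ [b] ++ a :: A, 0 < x := by
    intro x hx
    rcases List.mem_append.1 hx with hx | hx
    exacts [hB x hx, hA x hx]
  rw [mul_cfVal_reverse_eq_cfVal_iff hA hB (List.cons_ne_nil a A) (by simp)] at hAB
  rw [mul_cfVal_reverse_eq_cfVal_iff hA' hB' hA₀ hB₀, isMPal_iff hBA (by simp),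
    cfMatProd_append (B ++ [b]), ← cfMatProd_cons_one a A 0, ← cfMatProd_cons_one a A 1,
    ← cfMatProd_concat_one B b 0, ← cfMatProd_concat_one B b 1]
  simp only [Matrix.mul_apply, Fin.sum_univ_two]
  constructor <;> intro h <;> linarith

lemma cfPrefix_eq_cons (a : ℕ → ℕ) (i : ℕ) :
    cfPrefix a i = a 0 :: (List.range i).map (fun k => a (k + 1)) := by
  simp [cfPrefix, List.range_succ_eq_map]

lemma cfPrefix_eq_concat (a : ℕ → ℕ) (i : ℕ) :
    cfPrefix a i = (List.range i).map a ++ [a i] := by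
  simp [cfPrefix, List.range_succ]

lemma map_range_sub_eq_reverse (a : ℕ → ℕ) (i : ℕ) :
    (List.range i).map (fun k => a (i - k)) =
      ((List.range i).map (fun k => a (k + 1))).reverse := by
  rw [← List.map_reverse]
  refine List.ext_getElem (by simp) fun k hk _ => ?_
  simp only [List.length_map, List.length_range] at hk
  simp only [List.getElem_map, List.getElem_range, List.getElem_reverse, List.length_range]
  congr 1
  omega

lemma pos_of_mem_cfPrefix {a : ℕ → ℕ} {i : ℕ} (ha : ∀ k, k ≤ i → 0 < a k) :
    ∀ x ∈ cfPrefix a i, 0 < x := by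
  simp only [cfPrefix, List.mem_map, List.mem_range]
  rintro _ ⟨k, hk, rfl⟩
  exact ha k (Nat.le_of_lt_succ hk)

theorem concatenation_m_palindrome_iff_general
    (m : ℕ)
    (a : ℕ → ℕ) (i : ℕ) (hi : 1 ≤ i) (ha : ∀ k, k ≤ i → 0 < a k)
    (b : ℕ → ℕ) (j : ℕ) (hj : 1 ≤ j) (hb : ∀ k, k ≤ j → 0 < b k)
    (hAB : (m : ℝ) * cfVal (cfPrefix a i).reverse = cfVal (cfPrefix b j)) :
    IsMPal m (cfPrefix b j ++ cfPrefix a i) ↔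
      (m : ℝ) * cfVal ((List.range i).map (fun k => a (i - k))) =
        cfVal ((List.range j).map b) := by
  have hA := pos_of_mem_cfPrefix ha
  have hB := pos_of_mem_cfPrefix hb
  rw [cfPrefix_eq_cons a i] at hA hAB ⊢
  rw [cfPrefix_eq_concat b j] at hB hAB ⊢
  rw [map_range_sub_eq_reverse]
  exact isMPal_append_cons_iff hA hB
    (List.ne_nil_of_length_pos (by simpa using Nat.lt_of_succ_le hi))
    (List.ne_nil_of_length_pos (by simpa using Nat.lt_of_succ_le hj)) hAB

theorem concatenation_m_palindrome_iff
    (m : ℕ) (hm : 0 < m)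
    (a : ℕ → ℕ) (i : ℕ) (hi : 1 ≤ i) (ha : ∀ k, k ≤ i → 0 < a k)
    (b : ℕ → ℕ) (j : ℕ) (hj : 1 ≤ j) (hb : ∀ k, k ≤ j → 0 < b k)
    (hAB : (m : ℝ) * cfVal (cfPrefix a i).reverse = cfVal (cfPrefix b j)) :
    IsMPal m (cfPrefix b j ++ cfPrefix a i) ↔
      (m : ℝ) * cfVal ((List.range i).map (fun k => a (i - k))) =
        cfVal ((List.range j).map b) :=
  concatenation_m_palindrome_iff_general m a i hi ha b j hj hb hAB
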